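/- Define G : ℝ⁵ → ℝ⁵ by G(x¹,x²,x³,x⁴,x⁵) = ((x¹)² + ½(x³)² + ½(x⁴)² − (x⁵)² − (x²)², −2x¹x² + (√3/2)(x³)² − (√3/2)(x⁴)², x¹x³ + √3x²x³ + √3x⁴x⁵, x¹x⁴ − √3x²x⁴ + √3x³x⁵, −2x¹x⁵ + √3x³x⁴). Then: (i) each component of G is a harmonic polynomial, i.e. ΔG = 0 identically; (ii) |G(x)|² = |x|⁴ for all x ∈ ℝ⁵, so G maps the unit sphere S⁴ into S⁴; and (iii) |DG(x)|² = 14|x|² for all x ∈ ℝ⁵. -/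
import Mathlib


/-!
STATEMENT 5: Cartan's quadratic map G : ℝ⁵ → ℝ⁵ satisfies:
(i) each component is harmonic (ΔG = 0); (ii) |G(x)|² = |x|⁴ (so G maps S⁴ to S⁴);
(iii) |DG(x)|² = 14|x|².
-/

/-- Partial derivative of a map `ℝⁿ → ℝᵐ` in the `j`-th coordinate direction. -/
noncomputable def pd {n m : ℕ} (F : (Fin n → ℝ) → (Fin m → ℝ)) (j : Fin n)
    (x : Fin n → ℝ) : Fin m → ℝ :=
  fderiv ℝ F x (Pi.single j 1)

/-- Componentwise Euclidean Laplacian of a map `ℝⁿ → ℝᵐ`. -/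
noncomputable def lap {n m : ℕ} (F : (Fin n → ℝ) → (Fin m → ℝ)) (x : Fin n → ℝ) :
    Fin m → ℝ :=
  fun i => ∑ j, pd (pd F j) j x i

/-- Squared Frobenius norm of the total derivative of `F` at `x`. -/
noncomputable def frobSq {n m : ℕ} (F : (Fin n → ℝ) → (Fin m → ℝ)) (x : Fin n → ℝ) : ℝ :=
  ∑ i, ∑ j, (pd F j x i) ^ 2

/-- Cartan's quadratic map `G : ℝ⁵ → ℝ⁵`. -/
noncomputable def cartanG : (Fin 5 → ℝ) → Fin 5 → ℝ := fun x =>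
  ![(x 0) ^ 2 + (x 2) ^ 2 / 2 + (x 3) ^ 2 / 2 - (x 4) ^ 2 - (x 1) ^ 2,
    -2 * x 0 * x 1 + (Real.sqrt 3 / 2) * (x 2) ^ 2 - (Real.sqrt 3 / 2) * (x 3) ^ 2,
    x 0 * x 2 + Real.sqrt 3 * x 1 * x 2 + Real.sqrt 3 * x 3 * x 4,
    x 0 * x 3 - Real.sqrt 3 * x 1 * x 3 + Real.sqrt 3 * x 2 * x 4,
    -2 * x 0 * x 4 + Real.sqrt 3 * x 2 * x 3]

open ContinuousLinearMap

set_option maxHeartbeats 1000000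

noncomputable def P5 (k : Fin 5) : (Fin 5 → ℝ) →L[ℝ] ℝ := proj k

lemma hP5 (k : Fin 5) (x : Fin 5 → ℝ) : HasFDerivAt (fun y : Fin 5 → ℝ => y k) (P5 k) x :=
  (proj k : (Fin 5 → ℝ) →L[ℝ] ℝ).hasFDerivAt

lemma P5_apply (k : Fin 5) (v : Fin 5 → ℝ) : P5 k v = v k := rfl

noncomputable def DG (x : Fin 5 → ℝ) : (Fin 5 → ℝ) →L[ℝ] (Fin 5 → ℝ) :=
  pi ![(2*x 0) • P5 0 + (-2*x 1) • P5 1 + (x 2) • P5 2 + (x 3) • P5 3 + (-2*x 4) • P5 4,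
      (-2*x 1) • P5 0 + (-2*x 0) • P5 1 + (Real.sqrt 3 * x 2) • P5 2 + (-(Real.sqrt 3) * x 3) • P5 3,
      (x 2) • P5 0 + (Real.sqrt 3 * x 2) • P5 1 + (x 0 + Real.sqrt 3 * x 1) • P5 2 + (Real.sqrt 3 * x 4) • P5 3 + (Real.sqrt 3 * x 3) • P5 4,
      (x 3) • P5 0 + (-(Real.sqrt 3) * x 3) • P5 1 + (Real.sqrt 3 * x 4) • P5 2 + (x 0 - Real.sqrt 3 * x 1) • P5 3 + (Real.sqrt 3 * x 2) • P5 4,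
      (-2*x 4) • P5 0 + (Real.sqrt 3 * x 3) • P5 2 + (Real.sqrt 3 * x 2) • P5 3 + (-2*x 0) • P5 4]

lemma hc0 (x : Fin 5 → ℝ) :
    HasFDerivAt (fun y : Fin 5 → ℝ => (y 0) ^ 2 + (y 2) ^ 2 / 2 + (y 3) ^ 2 / 2 - (y 4) ^ 2 - (y 1) ^ 2)
      ((2*x 0) • P5 0 + (-2*x 1) • P5 1 + (x 2) • P5 2 + (x 3) • P5 3 + (-2*x 4) • P5 4) x := by
  rw [show (fun y : Fin 5 → ℝ => (y 0) ^ 2 + (y 2) ^ 2 / 2 + (y 3) ^ 2 / 2 - (y 4) ^ 2 - (y 1) ^ 2)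
      = (fun y : Fin 5 → ℝ => y 0 * y 0 + 2⁻¹ * (y 2 * y 2) + 2⁻¹ * (y 3 * y 3) - y 4 * y 4 - y 1 * y 1)
      from funext fun y => by ring]
  exact ((((((hP5 0 x).mul (hP5 0 x)).add (((hP5 2 x).mul (hP5 2 x)).const_mul 2⁻¹)).add
      (((hP5 3 x).mul (hP5 3 x)).const_mul 2⁻¹)).sub ((hP5 4 x).mul (hP5 4 x))).sub
      ((hP5 1 x).mul (hP5 1 x))).congr_fderiv (by
        ext v
        simp only [add_apply, sub_apply, smul_apply, coe_smul', Pi.smul_apply, P5_apply, smul_eq_mul]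
        ring)

lemma hc1 (x : Fin 5 → ℝ) :
    HasFDerivAt (fun y : Fin 5 → ℝ => -2 * y 0 * y 1 + (Real.sqrt 3 / 2) * (y 2) ^ 2 - (Real.sqrt 3 / 2) * (y 3) ^ 2)
      ((-2*x 1) • P5 0 + (-2*x 0) • P5 1 + (Real.sqrt 3 * x 2) • P5 2 + (-(Real.sqrt 3) * x 3) • P5 3) x := by
  rw [show (fun y : Fin 5 → ℝ => -2 * y 0 * y 1 + (Real.sqrt 3 / 2) * (y 2) ^ 2 - (Real.sqrt 3 / 2) * (y 3) ^ 2)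
      = (fun y : Fin 5 → ℝ => (-2 * y 0) * y 1 + (Real.sqrt 3 / 2) * (y 2 * y 2) - (Real.sqrt 3 / 2) * (y 3 * y 3))
      from funext fun y => by ring]
  exact (((((hP5 0 x).const_mul (-2)).mul (hP5 1 x)).add
      (((hP5 2 x).mul (hP5 2 x)).const_mul (Real.sqrt 3 / 2))).sub
      (((hP5 3 x).mul (hP5 3 x)).const_mul (Real.sqrt 3 / 2))).congr_fderiv (by
        ext v
        simp only [add_apply, sub_apply, smul_apply, coe_smul', Pi.smul_apply, P5_apply, smul_eq_mul]
        ring)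

lemma hc2 (x : Fin 5 → ℝ) :
    HasFDerivAt (fun y : Fin 5 → ℝ => y 0 * y 2 + Real.sqrt 3 * y 1 * y 2 + Real.sqrt 3 * y 3 * y 4)
      ((x 2) • P5 0 + (Real.sqrt 3 * x 2) • P5 1 + (x 0 + Real.sqrt 3 * x 1) • P5 2 + (Real.sqrt 3 * x 4) • P5 3 + (Real.sqrt 3 * x 3) • P5 4) x := by
  rw [show (fun y : Fin 5 → ℝ => y 0 * y 2 + Real.sqrt 3 * y 1 * y 2 + Real.sqrt 3 * y 3 * y 4)
      = (fun y : Fin 5 → ℝ => y 0 * y 2 + (Real.sqrt 3 * y 1) * y 2 + (Real.sqrt 3 * y 3) * y 4)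
      from funext fun y => by ring]
  exact ((((hP5 0 x).mul (hP5 2 x)).add
      ((((hP5 1 x).const_mul (Real.sqrt 3)).mul (hP5 2 x)))).add
      ((((hP5 3 x).const_mul (Real.sqrt 3)).mul (hP5 4 x)))).congr_fderiv (by
        ext v
        simp only [add_apply, smul_apply, coe_smul', Pi.smul_apply, P5_apply, smul_eq_mul]
        ring)

lemma hc3 (x : Fin 5 → ℝ) :
    HasFDerivAt (fun y : Fin 5 → ℝ => y 0 * y 3 - Real.sqrt 3 * y 1 * y 3 + Real.sqrt 3 * y 2 * y 4)
      ((x 3) • P5 0 + (-(Real.sqrt 3) * x 3) • P5 1 + (Real.sqrt 3 * x 4) • P5 2 + (x 0 - Real.sqrt 3 * x 1) • P5 3 + (Real.sqrt 3 * x 2) • P5 4) x := by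
  rw [show (fun y : Fin 5 → ℝ => y 0 * y 3 - Real.sqrt 3 * y 1 * y 3 + Real.sqrt 3 * y 2 * y 4)
      = (fun y : Fin 5 → ℝ => y 0 * y 3 - (Real.sqrt 3 * y 1) * y 3 + (Real.sqrt 3 * y 2) * y 4)
      from funext fun y => by ring]
  exact ((((hP5 0 x).mul (hP5 3 x)).sub
      ((((hP5 1 x).const_mul (Real.sqrt 3)).mul (hP5 3 x)))).add
      ((((hP5 2 x).const_mul (Real.sqrt 3)).mul (hP5 4 x)))).congr_fderiv (by
        ext v
        simp only [add_apply, sub_apply, smul_apply, coe_smul', Pi.smul_apply, P5_apply, smul_eq_mul]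
        ring)

lemma hc4 (x : Fin 5 → ℝ) :
    HasFDerivAt (fun y : Fin 5 → ℝ => -2 * y 0 * y 4 + Real.sqrt 3 * y 2 * y 3)
      ((-2*x 4) • P5 0 + (Real.sqrt 3 * x 3) • P5 2 + (Real.sqrt 3 * x 2) • P5 3 + (-2*x 0) • P5 4) x := by
  rw [show (fun y : Fin 5 → ℝ => -2 * y 0 * y 4 + Real.sqrt 3 * y 2 * y 3)
      = (fun y : Fin 5 → ℝ => (-2 * y 0) * y 4 + (Real.sqrt 3 * y 2) * y 3)
      from funext fun y => by ring]
  exact ((((hP5 0 x).const_mul (-2)).mul (hP5 4 x)).add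
      ((((hP5 2 x).const_mul (Real.sqrt 3)).mul (hP5 3 x)))).congr_fderiv (by
        ext v
        simp only [add_apply, smul_apply, coe_smul', Pi.smul_apply, P5_apply, smul_eq_mul]
        ring)

lemma hasFDerivAt_cartanG (x : Fin 5 → ℝ) : HasFDerivAt cartanG (DG x) x := by
  unfold DG
  refine hasFDerivAt_pi.2 fun i => ?_
  fin_cases i
  · exact hc0 x
  · exact hc1 x
  · exact hc2 x
  · exact hc3 x
  · exact hc4 x

lemma pd_cartanG (j : Fin 5) (x : Fin 5 → ℝ) : pd cartanG j x = DG x (Pi.single j 1) := by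
  rw [pd, (hasFDerivAt_cartanG x).fderiv]

lemma DG_symm (x v : Fin 5 → ℝ) : DG x v = DG v x := by
  funext i
  fin_cases i <;>
    simp only [DG, pi_apply, Fin.zero_eta, Fin.mk_one, Fin.reduceFinMk,
      Matrix.cons_val_zero, Matrix.cons_val_one, Matrix.head_cons,
      Matrix.cons_val_two, Matrix.tail_cons, Matrix.cons_val_three, Matrix.cons_val_four,
      add_apply, smul_apply, coe_smul', Pi.smul_apply, P5_apply, smul_eq_mul] <;> ring

lemma pd_pd_cartanG (j : Fin 5) (x : Fin 5 → ℝ) :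
    pd (pd cartanG j) j x = DG (Pi.single j 1) (Pi.single j 1) := by
  have h : pd cartanG j = ⇑(DG (Pi.single j 1)) := by
    funext y; rw [pd_cartanG, DG_symm]
  rw [pd, h, ContinuousLinearMap.fderiv]

lemma e0v : (Pi.single (0:Fin 5) (1:ℝ)) = ![1,0,0,0,0] := by funext k; fin_cases k <;> simp
lemma e1v : (Pi.single (1:Fin 5) (1:ℝ)) = ![0,1,0,0,0] := by funext k; fin_cases k <;> simp
lemma e2v : (Pi.single (2:Fin 5) (1:ℝ)) = ![0,0,1,0,0] := by funext k; fin_cases k <;> simp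
lemma e3v : (Pi.single (3:Fin 5) (1:ℝ)) = ![0,0,0,1,0] := by funext k; fin_cases k <;> simp
lemma e4v : (Pi.single (4:Fin 5) (1:ℝ)) = ![0,0,0,0,1] := by funext k; fin_cases k <;> simp

theorem stmt5 :
    (∀ (x : Fin 5 → ℝ) (i : Fin 5), lap cartanG x i = 0) ∧
    (∀ x : Fin 5 → ℝ, ∑ i, (cartanG x i) ^ 2 = (∑ j, (x j) ^ 2) ^ 2) ∧
    (∀ x : Fin 5 → ℝ, frobSq cartanG x = 14 * ∑ j, (x j) ^ 2) := by
  have h3 : Real.sqrt 3 ^ 2 = 3 := Real.sq_sqrt (by norm_num)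
  refine ⟨?_, ?_, ?_⟩
  · intro x i
    simp only [lap, pd_pd_cartanG, Fin.sum_univ_five, e0v, e1v, e2v, e3v, e4v]
    fin_cases i <;>
      simp only [DG, pi_apply, Fin.zero_eta, Fin.mk_one, Fin.reduceFinMk,
        Matrix.cons_val_zero, Matrix.cons_val_one, Matrix.head_cons,
        Matrix.cons_val_two, Matrix.tail_cons, Matrix.cons_val_three, Matrix.cons_val_four,
        add_apply, smul_apply, coe_smul', Pi.smul_apply, P5_apply, smul_eq_mul] <;>
      norm_num
  · intro x
    simp only [Fin.sum_univ_five, cartanG, Matrix.cons_val_zero, Matrix.cons_val_one,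
      Matrix.head_cons, Matrix.cons_val_two, Matrix.tail_cons, Matrix.cons_val_three,
      Matrix.cons_val_four]
    linear_combination ((x 2^2 - x 3^2)^2/4 + (x 1*x 2 + x 3*x 4)^2
      + (x 1*x 3 - x 2*x 4)^2 + x 2^2*x 3^2) * h3
  · intro x
    simp only [frobSq, pd_cartanG, Fin.sum_univ_five, e0v, e1v, e2v, e3v, e4v]
    simp only [DG, pi_apply, Fin.zero_eta, Fin.mk_one, Fin.reduceFinMk,
      Matrix.cons_val_zero, Matrix.cons_val_one, Matrix.head_cons,
      Matrix.cons_val_two, Matrix.tail_cons, Matrix.cons_val_three, Matrix.cons_val_four,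
      add_apply, smul_apply, coe_smul', Pi.smul_apply, P5_apply, smul_eq_mul,
      mul_one, mul_zero, add_zero, zero_add]
    linear_combination (2*x 1^2 + 4*x 2^2 + 4*x 3^2 + 2*x 4^2) * h3
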